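/- L² bound for the semidiscrete harmonic extension: Let d ≥ 1, h > 0, and let u : ℤ^d → ℝ be finitely supported with {hj : u_j ≠ 0} contained in a compact set K ⊂ ℝ^d. Let ũ be the harmonic (s = 1/2) extension of u, ũ_j(t) := (t/(2√π)) ∫_0^∞ e^{−t²/(4z)} (e^{zΔ_d} u)_j z^{−3/2} dz, where (e^{zΔ_d} u)_j := Σ_{m∈ℤ^d} G(j−m, z/h²) u_m. Then for every set E = E_d × [0, C_{d+1}] with E_d ⊂ ℝ^d bounded and C_{d+1} > 0 there exists a constant C = C(d, K, E_d, C_{d+1}) > 1, independent of h and u, such that ‖ũ‖_{L²(E)} ≤ C ‖u‖_{H¹(K)}. -/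

import Mathlib

open scoped BigOperators ENNReal
open MeasureTheory

/-- The lattice point `hj ∈ ℝ^d` associated to `j ∈ ℤ^d`. -/
def latticePt (d : ℕ) (h : ℝ) (j : Fin d → ℤ) : Fin d → ℝ := fun i => h * (j i : ℝ)

/-- Squared `L²` norm on the lattice over a set `U ⊂ ℝ^d`:
`‖u‖²_{L²(U)} = h^d ∑_{hj ∈ U} |u_j|²`. -/
noncomputable def latL2sq (d : ℕ) (h : ℝ) (U : Set (Fin d → ℝ))
    (u : (Fin d → ℤ) → ℝ) : ℝ≥0∞ :=
  ENNReal.ofReal (h ^ d) *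
    ∑' j : Fin d → ℤ,
      Set.indicator {j : Fin d → ℤ | latticePt d h j ∈ U}
        (fun j => ENNReal.ofReal ((u j) ^ 2)) j

/-- The `k`-th component of the symmetric discrete gradient. -/
noncomputable def discGrad (d : ℕ) (h : ℝ) (u : (Fin d → ℤ) → ℝ) (k : Fin d)
    (j : Fin d → ℤ) : ℝ :=
  (u (j + Pi.single k 1) - u (j - Pi.single k 1)) / (2 * h)

/-- Squared `H¹` norm on the lattice over a set `U ⊂ ℝ^d`. -/
noncomputable def latH1sq (d : ℕ) (h : ℝ) (U : Set (Fin d → ℝ))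
    (u : (Fin d → ℤ) → ℝ) : ℝ≥0∞ :=
  latL2sq d h U u + ∑ k : Fin d, latL2sq d h U (discGrad d h u k)

/-- Squared semidiscrete `L²` norm over a set `B ⊂ ℝ^d × [0,∞)`:
`‖w‖²_{L²(B)} = h^d ∑_j ∫_{{t ≥ 0 : (hj,t) ∈ B}} |w(hj,t)|² dt`. -/
noncomputable def sdL2sq (d : ℕ) (h : ℝ) (B : Set ((Fin d → ℝ) × ℝ))
    (w : (Fin d → ℤ) → ℝ → ℝ) : ℝ≥0∞ :=
  ENNReal.ofReal (h ^ d) *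
    ∑' j : Fin d → ℤ,
      ∫⁻ t in {t : ℝ | 0 ≤ t ∧ (latticePt d h j, t) ∈ B}, ENNReal.ofReal ((w j t) ^ 2)

/-- The upper half ball `B_r^+ ⊂ ℝ^d × [0,∞)`. -/
def ballPlus (d : ℕ) (r : ℝ) : Set ((Fin d → ℝ) × ℝ) :=
  {p | 0 ≤ p.2 ∧ (∑ i, (p.1 i) ^ 2) + p.2 ^ 2 < r ^ 2}

/-- The boundary ball `B_r' ⊂ ℝ^d`. -/
def ballTan (d : ℕ) (r : ℝ) : Set (Fin d → ℝ) :=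
  {x | ∑ i, (x i) ^ 2 < r ^ 2}

/-- The discrete Laplacian on `(hℤ)^d`. -/
noncomputable def discLap (d : ℕ) (h : ℝ) (u : (Fin d → ℤ) → ℝ) (j : Fin d → ℤ) : ℝ :=
  (∑ i, (u (j + Pi.single i 1) - 2 * u j + u (j - Pi.single i 1))) / h ^ 2

/-- Derivative in the `t` variable (one-sided within `[0,∞)`). -/
noncomputable def dt (w : ℝ → ℝ) : ℝ → ℝ := derivWithin w (Set.Ici 0)

/-- Modified Bessel function of the first kind of integer order `k`. -/
noncomputable def besselI (k : ℤ) (t : ℝ) : ℝ :=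
  ∑' ℓ : ℕ, (t / 2) ^ (2 * ℓ + k.natAbs) /
    ((Nat.factorial ℓ : ℝ) * Real.Gamma ((ℓ : ℝ) + (k.natAbs : ℝ) + 1))

/-- Semidiscrete heat kernel `G(m,t) = e^{-2dt} ∏ I_{m_i}(2t)` on `ℤ^d`. -/
noncomputable def heatG (d : ℕ) (m : Fin d → ℤ) (t : ℝ) : ℝ :=
  Real.exp (-(2 * (d : ℝ) * t)) * ∏ i, besselI (m i) (2 * t)

/-- The semidiscrete heat semigroup `e^{zΔ_d} u`. -/
noncomputable def heatSemi (d : ℕ) (h : ℝ) (u : (Fin d → ℤ) → ℝ) (z : ℝ)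
    (j : Fin d → ℤ) : ℝ :=
  ∑' m : Fin d → ℤ, heatG d (j - m) (z / h ^ 2) * u m

/-- The harmonic (`s = 1/2`) semidiscrete Caffarelli--Silvestre extension of `u`. -/
noncomputable def harmExt (d : ℕ) (h : ℝ) (u : (Fin d → ℤ) → ℝ) (j : Fin d → ℤ)
    (t : ℝ) : ℝ :=
  (t / (2 * Real.sqrt Real.pi)) *
    ∫ z in Set.Ioi (0 : ℝ), Real.exp (-(t ^ 2 / (4 * z))) * heatSemi d h u z j / z ^ ((3 : ℝ) / 2)

/-!
Both kernels in the definition of `ũ` are probability densities. The heat kernel `G(·, τ)` sums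
to one by the generating function `∑_{k ∈ ℤ} I_k(t) = e^t`, so `e^{zΔ_d}` is an `ℓ²` contraction.
The kernel `t/(2√π) z^{-3/2} e^{-t²/4z}` integrates to one, so by Cauchy–Schwarz
`‖ũ(·, t)‖_{ℓ²} ≤ ‖u‖_{ℓ²}` for every `t ≥ 0`. Integrating over `t ∈ [0, C_{d+1}]` gives
`‖ũ‖²_{L²(E)} ≤ C_{d+1} ‖u‖²_{ℓ²}`, and since `u` is supported in `K` its `ℓ²` norm is its
`L²(K)` norm, which is bounded by its `H¹(K)` norm.
-/

open Real Set
open scoped Nat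

noncomputable def besselTerm (n : ℕ) (t : ℝ) (ℓ : ℕ) : ℝ :=
  (t / 2) ^ (2 * ℓ + n) / ((ℓ ! : ℝ) * ((ℓ + n)! : ℝ))

lemma besselI_eq_tsum_besselTerm (k : ℤ) (t : ℝ) :
    besselI k t = ∑' ℓ, besselTerm k.natAbs t ℓ := by
  refine tsum_congr fun ℓ => ?_
  rw [besselTerm, show (ℓ : ℝ) + k.natAbs + 1 = ((ℓ + k.natAbs : ℕ) : ℝ) + 1 by push_cast; ring,
    Gamma_nat_eq_factorial]

lemma besselTerm_nonneg (n : ℕ) {t : ℝ} (ht : 0 ≤ t) (ℓ : ℕ) : 0 ≤ besselTerm n t ℓ := by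
  unfold besselTerm; positivity

lemma summable_besselTerm (n : ℕ) (t : ℝ) : Summable (besselTerm n t) := by
  refine .of_norm_bounded ((summable_pow_div_factorial ((t / 2) ^ 2)).mul_left (|t / 2| ^ n))
    fun ℓ => ?_
  have hfac : (1 : ℝ) ≤ ((ℓ + n)! : ℝ) := by exact_mod_cast (ℓ + n).factorial_pos
  rw [Real.norm_eq_abs, besselTerm, abs_div, abs_pow,
    abs_of_pos (by positivity : (0 : ℝ) < ℓ ! * (ℓ + n)!)]
  calc |t / 2| ^ (2 * ℓ + n) / (ℓ ! * (ℓ + n)!)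
      ≤ |t / 2| ^ (2 * ℓ + n) / ℓ ! :=
        div_le_div_of_nonneg_left (by positivity) (by positivity)
          (le_mul_of_one_le_right (by positivity) hfac)
    _ = |t / 2| ^ n * (((t / 2) ^ 2) ^ ℓ / ℓ !) := by
        rw [pow_add, pow_mul, sq_abs]; ring

lemma measurable_besselI (k : ℤ) : Measurable (besselI k) := by
  refine measurable_of_tendsto_metrizable
    (f := fun N t => ∑ ℓ ∈ Finset.range N, besselTerm k.natAbs t ℓ)
    (fun N => Finset.measurable_sum _ fun ℓ _ => by unfold besselTerm; fun_prop) ?_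
  refine tendsto_pi_nhds.2 fun t => ?_
  rw [besselI_eq_tsum_besselTerm]
  exact (summable_besselTerm _ t).hasSum.tendsto_sum_nat

lemma besselI_nonneg (k : ℤ) {t : ℝ} (ht : 0 ≤ t) : 0 ≤ besselI k t := by
  rw [besselI_eq_tsum_besselTerm]; exact tsum_nonneg (besselTerm_nonneg _ ht)

/-- `(a, b) ↦ (a - b, min a b)`: the index change turning the Cauchy square of the exponential
series into the sum over `k ∈ ℤ` of the Bessel series. -/
def natProdEquivIntProdNat : ℕ × ℕ ≃ ℤ × ℕ where
  toFun q := ((q.1 : ℤ) - q.2, min q.1 q.2)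
  invFun p := (p.2 + p.1.toNat, p.2 + (-p.1).toNat)
  left_inv q := by
    obtain ⟨a, b⟩ := q
    simp only [Prod.mk.injEq]
    constructor <;> omega
  right_inv p := by
    obtain ⟨k, ℓ⟩ := p
    simp only [Prod.mk.injEq]
    constructor <;> omega

lemma besselTerm_natProdEquivIntProdNat (t : ℝ) (a b : ℕ) :
    besselTerm (natProdEquivIntProdNat (a, b)).1.natAbs t (natProdEquivIntProdNat (a, b)).2 =
      (t / 2) ^ a / a ! * ((t / 2) ^ b / b !) := by
  change besselTerm ((a : ℤ) - b).natAbs t (min a b) = _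
  rcases le_total a b with hab | hab
  · obtain ⟨c, rfl⟩ := Nat.exists_eq_add_of_le hab
    rw [min_eq_left hab, show ((a : ℤ) - (a + c : ℕ)).natAbs = c by omega, besselTerm,
      show 2 * a + c = a + (a + c) by ring, pow_add]
    field_simp
  · obtain ⟨c, rfl⟩ := Nat.exists_eq_add_of_le hab
    rw [min_eq_right hab, show (((b + c : ℕ) : ℤ) - b).natAbs = c by omega, besselTerm,
      show 2 * b + c = (b + c) + b by ring, pow_add]
    field_simp

lemma ofReal_exp_eq_tsum {x : ℝ} (hx : 0 ≤ x) :
    ENNReal.ofReal (exp x) = ∑' n : ℕ, ENNReal.ofReal (x ^ n / n !) := by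
  rw [exp_eq_exp_ℝ, NormedSpace.exp_eq_tsum_div,
    ENNReal.ofReal_tsum_of_nonneg (fun n => by positivity) (summable_pow_div_factorial x)]

lemma tsum_ofReal_besselI {t : ℝ} (ht : 0 ≤ t) :
    ∑' k : ℤ, ENNReal.ofReal (besselI k t) = ENNReal.ofReal (exp t) := by
  have hI (k : ℤ) : ENNReal.ofReal (besselI k t) =
      ∑' ℓ, ENNReal.ofReal (besselTerm k.natAbs t ℓ) := by
    rw [besselI_eq_tsum_besselTerm,
      ENNReal.ofReal_tsum_of_nonneg (besselTerm_nonneg _ ht) (summable_besselTerm _ t)]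
  calc ∑' k : ℤ, ENNReal.ofReal (besselI k t)
      = ∑' p : ℤ × ℕ, ENNReal.ofReal (besselTerm p.1.natAbs t p.2) := by
        simp_rw [hI]; exact ENNReal.tsum_prod.symm
    _ = ∑' q : ℕ × ℕ, ENNReal.ofReal ((t / 2) ^ q.1 / q.1 !) *
          ENNReal.ofReal ((t / 2) ^ q.2 / q.2 !) := by
        rw [← natProdEquivIntProdNat.tsum_eq]
        refine tsum_congr fun ⟨a, b⟩ => ?_
        rw [besselTerm_natProdEquivIntProdNat, ENNReal.ofReal_mul (by positivity)]
    _ = ENNReal.ofReal (exp (t / 2)) * ENNReal.ofReal (exp (t / 2)) := by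
        rw [ENNReal.tsum_prod', ofReal_exp_eq_tsum (by positivity), ← ENNReal.tsum_mul_right]
        simp_rw [ENNReal.tsum_mul_left]
    _ = ENNReal.ofReal (exp t) := by
        rw [← ENNReal.ofReal_mul (exp_nonneg _), ← exp_add, add_halves]

lemma ENNReal.tsum_fin_pi_prod {ι : Type*} (F : ι → ℝ≥0∞) (n : ℕ) :
    ∑' m : Fin n → ι, ∏ i, F (m i) = (∑' k, F k) ^ n := by
  induction n with
  | zero => simp
  | succ n ih =>
    rw [← (Fin.consEquiv fun _ => ι).tsum_eq, ENNReal.tsum_prod', pow_succ', ← ih,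
      ← ENNReal.tsum_mul_right]
    refine tsum_congr fun k => ?_
    rw [← ENNReal.tsum_mul_left]
    refine tsum_congr fun m => ?_
    simp [Fin.consEquiv, Fin.prod_univ_succ]

lemma heatG_nonneg (d : ℕ) (m : Fin d → ℤ) {τ : ℝ} (hτ : 0 ≤ τ) : 0 ≤ heatG d m τ :=
  mul_nonneg (exp_nonneg _) (Finset.prod_nonneg fun i _ => besselI_nonneg _ (by positivity))

lemma measurable_heatG (d : ℕ) (m : Fin d → ℤ) : Measurable (heatG d m) := by
  unfold heatG
  exact (measurable_exp.comp (by fun_prop)).mul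
    (Finset.measurable_prod _ fun i _ => (measurable_besselI _).comp (by fun_prop))

lemma tsum_ofReal_heatG (d : ℕ) {τ : ℝ} (hτ : 0 ≤ τ) :
    ∑' m : Fin d → ℤ, ENNReal.ofReal (heatG d m τ) = 1 := by
  have hG (m : Fin d → ℤ) : ENNReal.ofReal (heatG d m τ) =
      ENNReal.ofReal (exp (-(2 * d * τ))) * ∏ i, ENNReal.ofReal (besselI (m i) (2 * τ)) := by
    rw [heatG, ENNReal.ofReal_mul (exp_nonneg _),
      ENNReal.ofReal_prod_of_nonneg fun i _ => besselI_nonneg _ (by positivity)]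
  simp_rw [hG]
  rw [ENNReal.tsum_mul_left, ENNReal.tsum_fin_pi_prod (fun k => ENNReal.ofReal (besselI k (2 * τ))),
    tsum_ofReal_besselI (by positivity),
    ← ENNReal.ofReal_pow (exp_nonneg _), ← ENNReal.ofReal_mul (exp_nonneg _), ← exp_nat_mul,
    ← exp_add, show -(2 * (d : ℝ) * τ) + d * (2 * τ) = 0 by ring, exp_zero, ENNReal.ofReal_one]

theorem tsum_sq_tsum_mul_sub_le {G : Type*} [AddGroup G] {K : G → ℝ} (hK0 : ∀ m, 0 ≤ K m)
    (hK : ∑' m, ENNReal.ofReal (K m) ≤ 1) {u : G → ℝ} (hu : u.support.Finite) :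
    ∑' j, ENNReal.ofReal ((∑' m, K (j - m) * u m) ^ 2) ≤ ∑' m, ENNReal.ofReal (u m ^ 2) := by
  set S := hu.toFinset
  have hS : ∀ m ∉ S, u m = 0 := fun m hm => by simpa [S] using hm
  have hrow (j : G) : ∑ m ∈ S, K (j - m) ≤ 1 := by
    rw [← ENNReal.ofReal_le_one, ENNReal.ofReal_sum_of_nonneg fun m _ => hK0 _]
    calc ∑ m ∈ S, ENNReal.ofReal (K (j - m)) ≤ ∑' m, ENNReal.ofReal (K (j - m)) :=
          ENNReal.sum_le_tsum S
      _ = ∑' m, ENNReal.ofReal (K m) := (Equiv.subLeft j).tsum_eq fun m => ENNReal.ofReal (K m)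
      _ ≤ 1 := hK
  have hcol (m : G) : ∑' j, ENNReal.ofReal (K (j - m)) ≤ 1 :=
    ((Equiv.subRight m).tsum_eq fun j => ENNReal.ofReal (K j)).trans_le hK
  have hCS (j : G) : (∑ m ∈ S, K (j - m) * u m) ^ 2 ≤ ∑ m ∈ S, K (j - m) * u m ^ 2 :=
    calc (∑ m ∈ S, K (j - m) * u m) ^ 2
        ≤ (∑ m ∈ S, K (j - m)) * ∑ m ∈ S, K (j - m) * u m ^ 2 :=
          Finset.sum_sq_le_sum_mul_sum_of_sq_le_mul S (fun m _ => hK0 _)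
            (fun m _ => mul_nonneg (hK0 _) (sq_nonneg _)) fun m _ => le_of_eq (by ring)
      _ ≤ ∑ m ∈ S, K (j - m) * u m ^ 2 :=
          mul_le_of_le_one_left (Finset.sum_nonneg fun m _ => mul_nonneg (hK0 _) (sq_nonneg _))
            (hrow j)
  calc ∑' j, ENNReal.ofReal ((∑' m, K (j - m) * u m) ^ 2)
      ≤ ∑' j, ∑ m ∈ S, ENNReal.ofReal (K (j - m)) * ENNReal.ofReal (u m ^ 2) := by
        refine ENNReal.tsum_le_tsum fun j => ?_
        rw [tsum_eq_sum fun m hm => by rw [hS m hm, mul_zero]]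
        refine (ENNReal.ofReal_le_ofReal (hCS j)).trans_eq ?_
        rw [ENNReal.ofReal_sum_of_nonneg fun m _ => mul_nonneg (hK0 _) (sq_nonneg _)]
        exact Finset.sum_congr rfl fun m _ => ENNReal.ofReal_mul (hK0 _)
    _ = ∑ m ∈ S, (∑' j, ENNReal.ofReal (K (j - m))) * ENNReal.ofReal (u m ^ 2) := by
        rw [Summable.tsum_finsetSum fun m _ => ENNReal.summable]
        simp_rw [ENNReal.tsum_mul_right]
    _ ≤ ∑ m ∈ S, ENNReal.ofReal (u m ^ 2) :=
        Finset.sum_le_sum fun m _ => mul_le_of_le_one_left zero_le (hcol m)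
    _ ≤ ∑' m, ENNReal.ofReal (u m ^ 2) := ENNReal.sum_le_tsum S

lemma tsum_sq_heatSemi_le (d : ℕ) (h : ℝ) {u : (Fin d → ℤ) → ℝ} (hu : u.support.Finite)
    {z : ℝ} (hz : 0 ≤ z) :
    ∑' j, ENNReal.ofReal (heatSemi d h u z j ^ 2) ≤ ∑' m, ENNReal.ofReal (u m ^ 2) :=
  tsum_sq_tsum_mul_sub_le (fun m => heatG_nonneg d m (by positivity))
    (tsum_ofReal_heatG d (by positivity)).le hu

lemma measurable_heatSemi (d : ℕ) (h : ℝ) {u : (Fin d → ℤ) → ℝ} (hu : u.support.Finite)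
    (j : Fin d → ℤ) : Measurable fun z => heatSemi d h u z j := by
  have hsum (z : ℝ) : heatSemi d h u z j = ∑ m ∈ hu.toFinset, heatG d (j - m) (z / h ^ 2) * u m :=
    tsum_eq_sum fun m hm => by simp_all
  simp_rw [hsum]
  exact Finset.measurable_sum _ fun m _ => ((measurable_heatG d _).comp (by fun_prop)).mul_const _

/-- The density of the `1/2`-stable subordinator: `harmExt` is the Bochner subordination
`ũ(t) = ∫_0^∞ subordKernel t z • e^{zΔ_d} u dz` of the heat semigroup. -/
noncomputable def subordKernel (t z : ℝ) : ℝ :=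
  t / (2 * √π) * (exp (-(t ^ 2 / (4 * z))) / z ^ ((3 : ℝ) / 2))

lemma harmExt_eq_integral_subordKernel (d : ℕ) (h : ℝ) (u : (Fin d → ℤ) → ℝ)
    (j : Fin d → ℤ) (t : ℝ) :
    harmExt d h u j t = ∫ z in Ioi 0, subordKernel t z * heatSemi d h u z j := by
  rw [harmExt, ← integral_const_mul]
  congr 1 with z
  rw [subordKernel]
  ring

lemma measurable_subordKernel (t : ℝ) : Measurable (subordKernel t) := by
  unfold subordKernel
  exact measurable_const.mul ((measurable_exp.comp (by fun_prop)).div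
    (measurable_id.pow_const _))

lemma subordKernel_nonneg {t z : ℝ} (ht : 0 ≤ t) (hz : 0 < z) : 0 ≤ subordKernel t z := by
  unfold subordKernel; positivity

/-- The substitution `z = 1/x` turns `subordKernel t` into the Gamma density
`x^{-1/2} e^{-t²x/4}`, whose integral is `(2/t) Γ(1/2) = 2√π/t`. -/
lemma integral_subordKernel {t : ℝ} (ht : 0 < t) : ∫ z in Ioi 0, subordKernel t z = 1 := by
  have hsub (x : ℝ) (hx : 0 < x) :
      (|(-1 : ℝ)| * x ^ ((-1 : ℝ) - 1)) • subordKernel t (x ^ (-1 : ℝ)) =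
        t / (2 * √π) * (x ^ ((1 / 2 : ℝ) - 1) * exp (-(t ^ 2 / 4 * x))) := by
    have hpow : x ^ ((-1 : ℝ) - 1) / (x ^ (-1 : ℝ)) ^ ((3 : ℝ) / 2) = x ^ ((1 / 2 : ℝ) - 1) := by
      rw [← rpow_mul hx.le, ← rpow_sub hx]; norm_num
    rw [smul_eq_mul, subordKernel, ← hpow, abs_neg, abs_one, one_mul, rpow_neg_one,
      show t ^ 2 / (4 * x⁻¹) = t ^ 2 / 4 * x by field_simp]
    ring
  rw [← integral_comp_rpow_Ioi _ (by norm_num : (-1 : ℝ) ≠ 0),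
    setIntegral_congr_fun measurableSet_Ioi hsub, integral_const_mul,
    integral_rpow_mul_exp_neg_mul_Ioi (by norm_num) (by positivity), Gamma_one_half_eq,
    one_div_div, div_rpow (by norm_num) (by positivity), ← sqrt_eq_rpow, ← sqrt_eq_rpow,
    sqrt_sq ht.le, show √4 = 2 by rw [show (4 : ℝ) = 2 ^ 2 by norm_num, sqrt_sq two_pos.le]]
  have := sqrt_pos.2 pi_pos
  field_simp

lemma lintegral_subordKernel_le_one {t : ℝ} (ht : 0 ≤ t) :
    ∫⁻ z in Ioi 0, ENNReal.ofReal (subordKernel t z) ≤ 1 := by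
  rcases ht.eq_or_lt with rfl | ht
  · simp [subordKernel]
  rw [← ofReal_integral_eq_lintegral_ofReal, integral_subordKernel ht, ENNReal.ofReal_one]
  · exact .of_integral_ne_zero (by rw [integral_subordKernel ht]; exact one_ne_zero)
  · exact (ae_restrict_iff' measurableSet_Ioi).2
      (ae_of_all _ fun z hz => subordKernel_nonneg ht.le hz)

lemma sq_lintegral_mul_le {α : Type*} [MeasurableSpace α] {μ : Measure α} {w f : α → ℝ≥0∞}
    (hw : AEMeasurable w μ) (hf : AEMeasurable f μ) :
    (∫⁻ a, w a * f a ∂μ) ^ 2 ≤ (∫⁻ a, w a ∂μ) * ∫⁻ a, w a * f a ^ 2 ∂μ := by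
  have hsq (x : ℝ≥0∞) : (x ^ (1 / 2 : ℝ)) ^ 2 = x := by
    rw [← ENNReal.rpow_natCast, ← ENNReal.rpow_mul]; norm_num
  have hroot (a : α) : w a ^ (1 / 2 : ℝ) * (w a * f a ^ 2) ^ (1 / 2 : ℝ) = w a * f a := by
    rw [ENNReal.mul_rpow_of_nonneg _ _ (by norm_num), ← mul_assoc,
      ← ENNReal.rpow_add_of_nonneg _ _ (by norm_num) (by norm_num), ← ENNReal.rpow_natCast,
      ← ENNReal.rpow_mul]
    norm_num
  have holder := ENNReal.lintegral_mul_norm_pow_le (g := fun a => w a * f a ^ 2) hw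
    (hw.mul (hf.pow_const 2))
    (by norm_num : (0 : ℝ) ≤ 1 / 2) (by norm_num : (0 : ℝ) ≤ 1 / 2) (by norm_num)
  simp_rw [hroot] at holder
  calc (∫⁻ a, w a * f a ∂μ) ^ 2
      ≤ ((∫⁻ a, w a ∂μ) ^ (1 / 2 : ℝ) * (∫⁻ a, w a * f a ^ 2 ∂μ) ^ (1 / 2 : ℝ)) ^ 2 :=
        pow_le_pow_left₀ zero_le holder 2
    _ = (∫⁻ a, w a ∂μ) * ∫⁻ a, w a * f a ^ 2 ∂μ := by rw [mul_pow, hsq, hsq]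

theorem tsum_sq_integral_mul_le {α ι : Type*} [MeasurableSpace α] [Countable ι]
    {μ : Measure α} {w : α → ℝ} (hw : AEMeasurable w μ) (hw0 : ∀ᵐ a ∂μ, 0 ≤ w a)
    (hw1 : ∫⁻ a, ENNReal.ofReal (w a) ∂μ ≤ 1) {F : ι → α → ℝ} (hF : ∀ i, AEMeasurable (F i) μ)
    {M : ℝ≥0∞} (hM : ∀ᵐ a ∂μ, ∑' i, ENNReal.ofReal (F i a ^ 2) ≤ M) :
    ∑' i, ENNReal.ofReal ((∫ a, w a * F i a ∂μ) ^ 2) ≤ M := by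
  have henorm (x : ℝ) : ‖x‖ₑ ^ 2 = ENNReal.ofReal (x ^ 2) := by
    rw [Real.enorm_eq_ofReal_abs, ← ENNReal.ofReal_pow (abs_nonneg _), sq_abs]
  have hw' : AEMeasurable (fun a => ENNReal.ofReal (w a)) μ := hw.ennreal_ofReal
  have hpoint (i : ι) : ENNReal.ofReal ((∫ a, w a * F i a ∂μ) ^ 2) ≤
      ∫⁻ a, ENNReal.ofReal (w a) * ENNReal.ofReal (F i a ^ 2) ∂μ :=
    calc ENNReal.ofReal ((∫ a, w a * F i a ∂μ) ^ 2)
        ≤ (∫⁻ a, ‖w a * F i a‖ₑ ∂μ) ^ 2 := by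
          rw [← henorm]; exact pow_le_pow_left₀ zero_le (enorm_integral_le_lintegral_enorm _) 2
      _ = (∫⁻ a, ENNReal.ofReal (w a) * ‖F i a‖ₑ ∂μ) ^ 2 := by
          refine congrArg (· ^ 2) (lintegral_congr_ae (hw0.mono fun a ha => ?_))
          dsimp only
          rw [enorm_mul, Real.enorm_eq_ofReal ha]
      _ ≤ (∫⁻ a, ENNReal.ofReal (w a) ∂μ) * ∫⁻ a, ENNReal.ofReal (w a) * ‖F i a‖ₑ ^ 2 ∂μ :=
          sq_lintegral_mul_le hw' (hF i).enorm
      _ ≤ ∫⁻ a, ENNReal.ofReal (w a) * ENNReal.ofReal (F i a ^ 2) ∂μ := by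
          simp_rw [henorm]; exact mul_le_of_le_one_left zero_le hw1
  calc ∑' i, ENNReal.ofReal ((∫ a, w a * F i a ∂μ) ^ 2)
      ≤ ∑' i, ∫⁻ a, ENNReal.ofReal (w a) * ENNReal.ofReal (F i a ^ 2) ∂μ :=
        ENNReal.tsum_le_tsum hpoint
    _ = ∫⁻ a, ENNReal.ofReal (w a) * ∑' i, ENNReal.ofReal (F i a ^ 2) ∂μ := by
        rw [← lintegral_tsum (f := fun i a => ENNReal.ofReal (w a) * ENNReal.ofReal (F i a ^ 2))
          fun i => hw'.mul ((hF i).pow_const 2).ennreal_ofReal]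
        simp_rw [ENNReal.tsum_mul_left]
    _ ≤ ∫⁻ a, ENNReal.ofReal (w a) * M ∂μ := lintegral_mono_ae (hM.mono fun a ha => by gcongr)
    _ = (∫⁻ a, ENNReal.ofReal (w a) ∂μ) * M := lintegral_mul_const'' M hw'
    _ ≤ M := mul_le_of_le_one_left zero_le hw1

lemma tsum_sq_harmExt_le (d : ℕ) (h : ℝ) {u : (Fin d → ℤ) → ℝ} (hu : u.support.Finite)
    {t : ℝ} (ht : 0 ≤ t) :
    ∑' j, ENNReal.ofReal (harmExt d h u j t ^ 2) ≤ ∑' m, ENNReal.ofReal (u m ^ 2) := by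
  simp_rw [harmExt_eq_integral_subordKernel]
  exact tsum_sq_integral_mul_le (measurable_subordKernel t).aemeasurable
    ((ae_restrict_iff' measurableSet_Ioi).2 (ae_of_all _ fun z hz => subordKernel_nonneg ht hz))
    (lintegral_subordKernel_le_one ht) (fun j => (measurable_heatSemi d h hu j).aemeasurable)
    ((ae_restrict_iff' measurableSet_Ioi).2
      (ae_of_all _ fun z hz => tsum_sq_heatSemi_le d h hu hz.le))

-- Unlike `lintegral_tsum` this needs no measurability, which `harmExt` is not known to have in `t`.
lemma tsum_lintegral_le {ι α : Type*} [MeasurableSpace α] (μ : Measure α) (f : ι → α → ℝ≥0∞) :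
    ∑' i, ∫⁻ a, f i a ∂μ ≤ ∫⁻ a, ∑' i, f i a ∂μ := by
  classical
  rw [ENNReal.tsum_eq_iSup_sum]
  refine iSup_le fun s => le_trans ?_ (lintegral_mono fun a => ENNReal.sum_le_tsum s)
  induction s using Finset.induction with
  | empty => simp
  | insert i s hi ih =>
    simp_rw [Finset.sum_insert hi]
    exact (add_le_add_right ih _).trans (le_lintegral_add _ _)

lemma latL2sq_eq_of_support_subset (d : ℕ) (h : ℝ) {U : Set (Fin d → ℝ)} {u : (Fin d → ℤ) → ℝ}
    (hU : ∀ j, u j ≠ 0 → latticePt d h j ∈ U) :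
    latL2sq d h U u = ENNReal.ofReal (h ^ d) * ∑' j, ENNReal.ofReal (u j ^ 2) := by
  rw [latL2sq]
  refine congrArg _ (tsum_congr fun j => ?_)
  by_cases hj : u j = 0
  · simp [hj]
  · exact Set.indicator_of_mem (show j ∈ {j | latticePt d h j ∈ U} from hU j hj) _

lemma sdL2sq_prod_Icc_le (d : ℕ) (h : ℝ) (E : Set (Fin d → ℝ)) (c : ℝ)
    (w : (Fin d → ℤ) → ℝ → ℝ) :
    sdL2sq d h (E ×ˢ Icc 0 c) w ≤
      ENNReal.ofReal (h ^ d) * ∫⁻ t in Icc 0 c, ∑' j, ENNReal.ofReal (w j t ^ 2) := by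
  refine mul_le_mul_right (le_trans (ENNReal.tsum_le_tsum fun j => ?_) (tsum_lintegral_le _ _)) _
  exact lintegral_mono_set fun t ht => ht.2.2

lemma sdL2sq_harmExt_le (d : ℕ) (h : ℝ) {U : Set (Fin d → ℝ)} {u : (Fin d → ℤ) → ℝ}
    (hu : u.support.Finite) (hU : ∀ j, u j ≠ 0 → latticePt d h j ∈ U) (E : Set (Fin d → ℝ))
    (c : ℝ) :
    sdL2sq d h (E ×ˢ Icc 0 c) (harmExt d h u) ≤ ENNReal.ofReal c * latL2sq d h U u := by
  calc sdL2sq d h (E ×ˢ Icc 0 c) (harmExt d h u)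
      ≤ ENNReal.ofReal (h ^ d) * ∫⁻ _ in Icc 0 c, ∑' m, ENNReal.ofReal (u m ^ 2) := by
        refine (sdL2sq_prod_Icc_le d h E c _).trans (mul_le_mul_right ?_ _)
        exact setLIntegral_mono' measurableSet_Icc fun t ht => tsum_sq_harmExt_le d h hu ht.1
    _ = ENNReal.ofReal c * latL2sq d h U u := by
        rw [setLIntegral_const, Real.volume_Icc, sub_zero, latL2sq_eq_of_support_subset d h hU]
        ring

theorem extension_L2_bound_general (d : ℕ) (K : Set (Fin d → ℝ))
    (Ed : Set (Fin d → ℝ)) (Cd1 : ℝ) (hCd1 : 0 < Cd1) :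
    ∃ C : ℝ, 1 < C ∧ ∀ h : ℝ, 0 < h → ∀ u : (Fin d → ℤ) → ℝ,
      (Function.support u).Finite → (∀ j, u j ≠ 0 → latticePt d h j ∈ K) →
      (sdL2sq d h (Ed ×ˢ Set.Icc (0 : ℝ) Cd1) (harmExt d h u)) ^ ((1 : ℝ) / 2) ≤
        ENNReal.ofReal C * (latH1sq d h K u) ^ ((1 : ℝ) / 2) := by
  refine ⟨√Cd1 + 1, by linarith [sqrt_pos.2 hCd1], fun h _ u hu hK => ?_⟩
  have hbound : sdL2sq d h (Ed ×ˢ Icc 0 Cd1) (harmExt d h u) ≤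
      ENNReal.ofReal Cd1 * latH1sq d h K u :=
    (sdL2sq_harmExt_le d h hu hK Ed Cd1).trans (mul_le_mul_right le_self_add _)
  calc (sdL2sq d h (Ed ×ˢ Icc 0 Cd1) (harmExt d h u)) ^ ((1 : ℝ) / 2)
      ≤ (ENNReal.ofReal Cd1 * latH1sq d h K u) ^ ((1 : ℝ) / 2) :=
        ENNReal.rpow_le_rpow hbound (by norm_num)
    _ = ENNReal.ofReal √Cd1 * (latH1sq d h K u) ^ ((1 : ℝ) / 2) := by
        rw [ENNReal.mul_rpow_of_nonneg _ _ (by norm_num),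
          ENNReal.ofReal_rpow_of_nonneg hCd1.le (by norm_num), sqrt_eq_rpow]
    _ ≤ ENNReal.ofReal (√Cd1 + 1) * (latH1sq d h K u) ^ ((1 : ℝ) / 2) := by
        gcongr; linarith

/-- `L²` bound for the semidiscrete harmonic extension:
`‖ũ‖_{L²(E_d × [0,C_{d+1}])} ≤ C ‖u‖_{H¹(K)}`, uniformly in `h` and `u`. -/
theorem extension_L2_bound (d : ℕ) (hd : 1 ≤ d) (K : Set (Fin d → ℝ)) (hK : IsCompact K)
    (Ed : Set (Fin d → ℝ)) (hEd : Bornology.IsBounded Ed) (Cd1 : ℝ) (hCd1 : 0 < Cd1) :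
    ∃ C : ℝ, 1 < C ∧ ∀ h : ℝ, 0 < h → ∀ u : (Fin d → ℤ) → ℝ,
      (Function.support u).Finite → (∀ j, u j ≠ 0 → latticePt d h j ∈ K) →
      (sdL2sq d h (Ed ×ˢ Set.Icc (0 : ℝ) Cd1) (harmExt d h u)) ^ ((1 : ℝ) / 2) ≤
        ENNReal.ofReal C * (latH1sq d h K u) ^ ((1 : ℝ) / 2) :=
  extension_L2_bound_general d K Ed Cd1 hCd1
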